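/- In the coherence-space term model, where Λ_D consists of antichains t ⊆ |D| (sets of pairwise incoherent tokens) and Π_D consists of downward-closed ideals π ⊆ |D| (subsets closed under subsets and finite unions of compatible tokens), with pole t ⋆ π ∈ ⫫ iff t ∩ π ≠ ∅: every downward-closed ideal I in |D| equals I_{s⃗} for a unique s⃗ ∈ D^ω given by s_n = ⋃_{α ∈ I} α_n, where I_{s⃗} = { α ∈ |D| : ∀ n, α_n ⊆ s_n }. -/

import Mathlib

/- Tokens of the web `|D|` are hereditarily finite sets of pairs `(n, β)` of a natural
number and a token, encoded extensionally as natural numbers: the token `α : ℕ` contains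
the pair `(n, β)` iff the bit of `α` at position `Nat.pair n β` is set.  Union of tokens
is bitwise or (`|||`), the empty token is `0`, and token inclusion is bitwise. -/

/-- `α_n`: the set of tokens `β` with `(n, β) ∈ α`. -/
def comp (α n : ℕ) : Set ℕ := {β | α.testBit (Nat.pair n β) = true}

/-- `β` is a sub-token (subset) of `α`. -/
def subtok (β α : ℕ) : Prop := ∀ i, β.testBit i = true → α.testBit i = true

/-- The finite approximations `|D_m|` of the web: `|D_0| = ∅` and `|D_{m+1}|` consists of
the `α` all of whose components lie in `|D_m|` and are pairwise coherent there, where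
`β, γ` are coherent iff `β ∪ γ ∈ |D_m|` implies `β = γ`. -/
def Wlevel : ℕ → Set ℕ
  | 0 => ∅
  | m + 1 => {α | ∀ k, comp α k ⊆ Wlevel m ∧
      ∀ β ∈ comp α k, ∀ γ ∈ comp α k, (β ||| γ) ∈ Wlevel m → β = γ}

/-- The web `|D| = ⋃ m, |D_m|`. -/
def WebD : Set ℕ := ⋃ m, Wlevel m

/-- An element of `D`: an antichain in `(|D|, ⊆)`, i.e. a set of tokens any two of which
are equal whenever their union is again a token. -/
def IsAntich (t : Set ℕ) : Prop :=
  t ⊆ WebD ∧ ∀ α ∈ t, ∀ β ∈ t, (α ||| β) ∈ WebD → α = β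

/-- A downward-closed ideal in `|D|`: closed under sub-tokens and finite unions
(including the empty union `0`). -/
def IsIdeal (I : Set ℕ) : Prop :=
  I ⊆ WebD ∧ (0 : ℕ) ∈ I ∧
  (∀ α ∈ I, ∀ β ∈ WebD, subtok β α → β ∈ I) ∧
  (∀ α ∈ I, ∀ β ∈ I, (α ||| β) ∈ I)

lemma comp_or (α β n : ℕ) : comp (α ||| β) n = comp α n ∪ comp β n := by
  ext γ
  simp [comp, Nat.testBit_or, Set.mem_union]

/-- Monotonicity of levels, together with downward absoluteness of unions. -/
lemma wlevel_key : ∀ m : ℕ, (Wlevel m ⊆ Wlevel (m + 1)) ∧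
    (∀ β ∈ Wlevel m, ∀ γ ∈ Wlevel m, (β ||| γ) ∈ Wlevel (m + 1) → (β ||| γ) ∈ Wlevel m) := by
  intro m
  induction m with
  | zero =>
    constructor
    · intro α hα; exact absurd hα (by simp [Wlevel])
    · intro β hβ; exact absurd hβ (by simp [Wlevel])
  | succ m ih =>
    obtain ⟨ihA, ihB⟩ := ih
    constructor
    · intro α hα
      intro k
      refine ⟨fun β hβ => ihA ((hα k).1 hβ), ?_⟩
      intro β hβ γ hγ hbg
      exact (hα k).2 β hβ γ hγ (ihB β ((hα k).1 hβ) γ ((hα k).1 hγ) hbg)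
    · intro β hβ γ hγ hbg
      intro k
      constructor
      · rw [comp_or]
        rintro δ (hδ | hδ)
        · exact (hβ k).1 hδ
        · exact (hγ k).1 hδ
      · intro δ hδ ε hε hde
        exact (hbg k).2 δ hδ ε hε (ihA hde)

lemma wlevel_mono {m m' : ℕ} (h : m ≤ m') : Wlevel m ⊆ Wlevel m' := by
  induction h with
  | refl => exact le_refl _
  | step _ ih => exact fun α hα => (wlevel_key _).1 (ih hα)

/-- Downward absoluteness: if the union of two tokens of level `m` is a token at some
(possibly higher) level, it is already a token at level `m`. -/
lemma wlevel_or_down {m : ℕ} {β γ : ℕ} (hβ : β ∈ Wlevel m) (hγ : γ ∈ Wlevel m) :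
    ∀ j, (β ||| γ) ∈ Wlevel (m + j) → (β ||| γ) ∈ Wlevel m := by
  intro j
  induction j with
  | zero => exact id
  | succ j ih =>
    intro h
    exact ih ((wlevel_key (m + j)).2 β (wlevel_mono (Nat.le_add_right m j) hβ)
      γ (wlevel_mono (Nat.le_add_right m j) hγ) h)

lemma webD_or_level {m : ℕ} {β γ : ℕ} (hβ : β ∈ Wlevel m) (hγ : γ ∈ Wlevel m)
    (h : (β ||| γ) ∈ WebD) : (β ||| γ) ∈ Wlevel m := by
  obtain ⟨c, hc⟩ := Set.mem_iUnion.1 h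
  rcases le_total c m with hcm | hmc
  · exact wlevel_mono hcm hc
  · exact wlevel_or_down hβ hγ (c - m) (by rwa [Nat.add_sub_cancel' hmc])

lemma comp_subset_webD {α : ℕ} (hα : α ∈ WebD) (n : ℕ) : comp α n ⊆ WebD := by
  obtain ⟨m, hm⟩ := Set.mem_iUnion.1 hα
  cases m with
  | zero => exact absurd hm (by simp [Wlevel])
  | succ m => exact fun β hβ => Set.mem_iUnion.2 ⟨m, (hm n).1 hβ⟩

/-- The singleton token `{(n, β)}` is in the web whenever `β` is. -/
lemma singleton_mem_webD {β : ℕ} (hβ : β ∈ WebD) (n : ℕ) :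
    (2 ^ Nat.pair n β) ∈ WebD := by
  obtain ⟨m, hm⟩ := Set.mem_iUnion.1 hβ
  refine Set.mem_iUnion.2 ⟨m + 1, fun k => ?_⟩
  have hcomp : ∀ γ ∈ comp (2 ^ Nat.pair n β) k, γ = β := by
    intro γ hγ
    have : Nat.pair n β = Nat.pair k γ := by
      have := hγ
      simp only [comp, Set.mem_setOf_eq, Nat.testBit_two_pow, decide_eq_true_eq] at this
      exact this
    exact ((Nat.pair_eq_pair.1 this).2).symm
  constructor
  · intro γ hγ; rw [hcomp γ hγ]; exact hm
  · intro δ hδ ε hε _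
    rw [hcomp δ hδ, hcomp ε hε]

/-- Bitwise or of `f 0, …, f (n-1)`. -/
def orUnder (f : ℕ → ℕ) : ℕ → ℕ
  | 0 => 0
  | n + 1 => orUnder f n ||| f n

lemma orUnder_mem {I : Set ℕ} (hI : IsIdeal I) (f : ℕ → ℕ) (n : ℕ)
    (hf : ∀ i < n, f i ∈ I) : orUnder f n ∈ I := by
  induction n with
  | zero => exact hI.2.1
  | succ n ih =>
    exact hI.2.2.2 _ (ih fun i hi => hf i (Nat.lt_succ_of_lt hi)) _
      (hf n (Nat.lt_succ_self n))

lemma testBit_orUnder {f : ℕ → ℕ} {i n j : ℕ} (hi : i < n) (h : (f i).testBit j = true) :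
    (orUnder f n).testBit j = true := by
  induction n with
  | zero => exact absurd hi (Nat.not_lt_zero i)
  | succ n ih =>
    rw [orUnder, Nat.testBit_or]
    rcases Nat.lt_succ_iff_lt_or_eq.1 hi with hi' | rfl
    · rw [ih hi']; simp
    · rw [h]; simp

/-- Every downward-closed ideal `I` in `|D|` equals `I_{s⃗} = {α ∈ |D| : ∀ n, α_n ⊆ s_n}`
for a unique sequence `s⃗ ∈ D^ω` of antichains, which is given by
`s_n = ⋃_{α ∈ I} α_n`. -/
theorem ideal_eq_unique_stack (I : Set ℕ) (hI : IsIdeal I) :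
    (∃! s : ℕ → Set ℕ, (∀ n, IsAntich (s n)) ∧
        I = {α | α ∈ WebD ∧ ∀ n, comp α n ⊆ s n}) ∧
    (∀ s : ℕ → Set ℕ, (∀ n, IsAntich (s n)) →
        I = {α | α ∈ WebD ∧ ∀ n, comp α n ⊆ s n} →
        ∀ n, s n = ⋃ α ∈ I, comp α n) := by
  classical
  obtain ⟨hIW, h0, hdown, hor⟩ := hI
  -- the canonical sequence
  set s₀ : ℕ → Set ℕ := fun n => ⋃ α ∈ I, comp α n with hs₀
  -- each s₀ n is an antichain
  have hanti : ∀ n, IsAntich (s₀ n) := by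
    intro n
    constructor
    · intro β hβ
      obtain ⟨α, hα, hβ⟩ := Set.mem_iUnion₂.1 hβ
      exact comp_subset_webD (hIW hα) n hβ
    · intro β hβ γ hγ hbg
      obtain ⟨α, hα, hβ⟩ := Set.mem_iUnion₂.1 hβ
      obtain ⟨α', hα', hγ⟩ := Set.mem_iUnion₂.1 hγ
      have hδ : (α ||| α') ∈ I := hor α hα α' hα'
      obtain ⟨m, hm⟩ := Set.mem_iUnion.1 (hIW hδ)
      cases m with
      | zero => exact absurd hm (by simp [Wlevel])
      | succ m =>
        have hβ' : β ∈ comp (α ||| α') n := by rw [comp_or]; exact Or.inl hβ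
        have hγ' : γ ∈ comp (α ||| α') n := by rw [comp_or]; exact Or.inr hγ
        exact (hm n).2 β hβ' γ hγ'
          (webD_or_level ((hm n).1 hβ') ((hm n).1 hγ') hbg)
  -- I equals the set cut out by s₀
  have hIeq : I = {α | α ∈ WebD ∧ ∀ n, comp α n ⊆ s₀ n} := by
    ext α
    constructor
    · intro hα
      refine ⟨hIW hα, fun n β hβ => ?_⟩
      simp only [hs₀, Set.mem_iUnion]
      exact ⟨α, hα, hβ⟩
    · rintro ⟨hαW, hαs⟩
      -- choose, for each set bit `i` of `α`, an element of `I` containing that bit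
      have hbit : ∀ i, α.testBit i = true → ∃ γ ∈ I, γ.testBit i = true := by
        intro i hi
        have : (i.unpair.2) ∈ comp α i.unpair.1 := by
          simp only [comp, Set.mem_setOf_eq, Nat.pair_unpair]
          exact hi
        have := hαs i.unpair.1 this
        simp only [hs₀, Set.mem_iUnion] at this
        obtain ⟨γ, hγI, hγ⟩ := this
        refine ⟨γ, hγI, ?_⟩
        simpa only [comp, Set.mem_setOf_eq, Nat.pair_unpair] using hγ
      let f : ℕ → ℕ := fun i =>
        if h : α.testBit i = true then Classical.choose (hbit i h) else 0
      have hfI : ∀ i, f i ∈ I := by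
        intro i
        by_cases h : α.testBit i = true
        · simpa [f, h] using (Classical.choose_spec (hbit i h)).1
        · simpa [f, h] using h0
      have hfbit : ∀ i, α.testBit i = true → (f i).testBit i = true := by
        intro i h
        simpa [f, h] using (Classical.choose_spec (hbit i h)).2
      have hu : orUnder f α ∈ I := orUnder_mem ⟨hIW, h0, hdown, hor⟩ f α fun i _ => hfI i
      have hsub : subtok α (orUnder f α) := by
        intro i hi
        have hia : i < α :=
          lt_of_lt_of_le (Nat.lt_two_pow_self (n := i)) (Nat.ge_two_pow_of_testBit hi)
        exact testBit_orUnder hia (hfbit i hi)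
      exact hdown _ hu α hαW hsub
  -- second part: any suitable sequence is the canonical one
  have huniq : ∀ s : ℕ → Set ℕ, (∀ n, IsAntich (s n)) →
      I = {α | α ∈ WebD ∧ ∀ n, comp α n ⊆ s n} → ∀ n, s n = ⋃ α ∈ I, comp α n := by
    intro s hs hseq n
    ext β
    constructor
    · intro hβ
      -- the singleton token {(n, β)} is in I
      have hβW : β ∈ WebD := (hs n).1 hβ
      set σ : ℕ := 2 ^ Nat.pair n β with hσ
      have hσW : σ ∈ WebD := singleton_mem_webD hβW n
      have hσcomp : ∀ m γ, γ ∈ comp σ m → m = n ∧ γ = β := by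
        intro m γ hγ
        simp only [hσ, comp, Set.mem_setOf_eq, Nat.testBit_two_pow,
          decide_eq_true_eq] at hγ
        exact ⟨(Nat.pair_eq_pair.1 hγ).1.symm, (Nat.pair_eq_pair.1 hγ).2.symm⟩
      have hσI : σ ∈ I := by
        rw [hseq]
        refine ⟨hσW, fun m γ hγ => ?_⟩
        obtain ⟨rfl, rfl⟩ := hσcomp m γ hγ
        exact hβ
      refine Set.mem_iUnion₂.2 ⟨σ, hσI, ?_⟩
      simp only [comp, Set.mem_setOf_eq, hσ]
      exact Nat.testBit_two_pow_self
    · intro hβ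
      obtain ⟨α, hα, hβ⟩ := Set.mem_iUnion₂.1 hβ
      rw [hseq] at hα
      exact hα.2 n hβ
  refine ⟨⟨s₀, ⟨hanti, hIeq⟩, ?_⟩, huniq⟩
  intro s ⟨hs1, hs2⟩
  funext n
  rw [huniq s hs1 hs2 n]
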